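/- arXiv:0905.4647 — 2 statements merged into one kernel-verified Lean document; each statement's English description precedes it below -/
import Mathlib

section
/- Let A be a finitely generated commutative ℂ-algebra which is an integral domain, let f ∈ A be nonzero, and let ∂ be a locally nilpotent ℂ-derivation of the localization A_f = A[1/f] satisfying ∂(f/1) = 0. Then there exists N ∈ ℕ such that the derivation f^N·∂ of A_f maps the image of A in A_f into itself, and the induced ℂ-derivation of A is locally nilpotent (and it is nonzero if ∂ is nonzero). -/
/-!
Each generator of `A` is sent by `∂` to a fraction whose denominator is a power of `f`, and the
elements `a` with `f ^ N • ∂ a ∈ A` form a subalgebra by the Leibniz rule; as `A` is finitely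
generated, one power `f ^ N` therefore clears the denominators of `∂` on all of `A`. Since
`∂ f = 0`, the `n`-th iterate of `f ^ N • ∂` is `f ^ (N * n) • ∂ ^ n`, so local nilpotence descends
along the injection `A → A_f`; and a derivation of `A_f` that vanishes on `A` is zero.
-/

open Function

namespace Derivation

variable {R A B : Type*} [CommSemiring R] [CommSemiring A] [CommSemiring B]

theorem eq_zero_of_isLocalization {N : Type*} [AddCommMonoid N] [Module B N] [Algebra R B]
    [Module R N] [Algebra A B] (M : Submonoid A) [IsLocalization M B] (D : Derivation R B N)
    (h : ∀ a, D (algebraMap A B a) = 0) : D = 0 := by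
  ext z
  obtain ⟨⟨x, m⟩, hz⟩ := IsLocalization.surj M z
  have hDz := congrArg D hz
  rw [leibniz, h, h, smul_zero, zero_add] at hDz
  exact ((IsLocalization.map_units B m).smul_eq_zero).mp hDz

variable [Algebra R A]

theorem iterate_smul_apply_of_map_eq_zero (D : Derivation R A A) {c : A} (hc : D c = 0)
    (n : ℕ) (x : A) : (⇑(c • D))^[n] x = c ^ n * (⇑D)^[n] x := by
  induction n with
  | zero => simp
  | succ n ih =>
    have hcn : D (c ^ n) = 0 := by rw [leibniz_pow, hc, smul_zero, smul_zero]
    rw [iterate_succ_apply', iterate_succ_apply', ih, smul_apply, leibniz, hcn, smul_zero,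
      add_zero, smul_eq_mul, smul_eq_mul]
    ring

section Preimage

variable {M : Type*} [AddCommMonoid M] [Module A M] [Module R M]

def subalgebraPreimage (d : Derivation R A M) (P : Submodule A M) : Subalgebra R A where
  carrier := {a | d a ∈ P}
  mul_mem' {x y} hx hy := by
    simp only [Set.mem_ofPred_eq, leibniz]
    exact P.add_mem (P.smul_mem x hy) (P.smul_mem y hx)
  add_mem' hx hy := by
    simp only [Set.mem_ofPred_eq, map_add]
    exact P.add_mem hx hy
  algebraMap_mem' r := by
    simp only [Set.mem_ofPred_eq, map_algebraMap]
    exact P.zero_mem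

@[simp]
theorem mem_subalgebraPreimage (d : Derivation R A M) (P : Submodule A M) (a : A) :
    a ∈ d.subalgebraPreimage P ↔ d a ∈ P :=
  Iff.rfl

end Preimage

variable [Algebra R B] [Algebra A B] [IsScalarTower R A B]

noncomputable def descend (d : Derivation R A B) (hinj : Injective (algebraMap A B))
    (hd : ∀ a, ∃ b, algebraMap A B b = d a) : Derivation R A A :=
  have he (a : A) : algebraMap A B (hd a).choose = d a := (hd a).choose_spec
  { toFun a := (hd a).choose
    map_add' x y := hinj <| by rw [he, map_add, map_add, he, he]
    map_smul' r x := hinj <| by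
      rw [he, map_smul, RingHom.id_apply, Algebra.smul_def, Algebra.smul_def, map_mul, he,
        ← IsScalarTower.algebraMap_apply]
    map_one_eq_zero' := hinj <| by
      simp only [LinearMap.coe_mk, AddHom.coe_mk]
      rw [he, map_one_eq_zero, map_zero]
    leibniz' x y := hinj <| by
      simp only [LinearMap.coe_mk, AddHom.coe_mk]
      rw [he, leibniz, map_add, smul_eq_mul, smul_eq_mul, map_mul, map_mul, he, he,
        Algebra.smul_def, Algebra.smul_def] }

theorem algebraMap_descend (d : Derivation R A B) (hinj : Injective (algebraMap A B))
    (hd : ∀ a, ∃ b, algebraMap A B b = d a) (a : A) :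
    algebraMap A B (d.descend hinj hd a) = d a :=
  (hd a).choose_spec

theorem exists_smul_mem_range_of_isLocalization [Algebra.FiniteType R A] (M : Submonoid A)
    [IsLocalization M B] (d : Derivation R A B) :
    ∃ m ∈ M, ∀ a, ∃ b, algebraMap A B b = m • d a := by
  classical
  set P := LinearMap.range (Algebra.linearMap A B)
  have clear_denom (a : A) : ∃ m ∈ M, m • d a ∈ P := by
    obtain ⟨⟨b, m⟩, hb⟩ := IsLocalization.surj M (d a)
    exact ⟨m, m.2, b, by rw [Algebra.linearMap_apply, ← hb, Algebra.smul_def, mul_comm]⟩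
  choose m hmM hm using clear_denom
  obtain ⟨s, hs⟩ := Algebra.FiniteType.out (R := R) (A := A)
  refine ⟨∏ x ∈ s, m x, M.prod_mem fun x _ ↦ hmM x, fun a ↦ ?_⟩
  have hle : Algebra.adjoin R ↑s ≤ ((∏ x ∈ s, m x) • d).subalgebraPreimage P := by
    refine Algebra.adjoin_le fun x hx ↦ ?_
    rw [SetLike.mem_coe, mem_subalgebraPreimage, smul_apply, ← s.mul_prod_erase m hx,
      mul_comm, mul_smul]
    exact P.smul_mem _ (hm x)
  obtain ⟨b, hb⟩ := hle (hs ▸ Algebra.mem_top : a ∈ Algebra.adjoin R ↑s)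
  exact ⟨b, hb⟩

end Derivation

/-- extension step in the proof of Proposition 3.5, (ii)⇒(i). Let `A` be a
finitely generated integral ℂ-algebra, let `f ∈ A` be nonzero, and let `∂` be a locally
nilpotent ℂ-derivation of `A_f = A[1/f]` with `∂(f/1) = 0`. Then there is an `N ∈ ℕ` such
that the derivation `f^N·∂` of `A_f` maps the image of `A` into itself; i.e. there is a
ℂ-derivation `D'` of `A` whose extension to `A_f` is `f^N·∂`, and this induced derivation
`D'` is locally nilpotent (and it is nonzero if `∂` is nonzero). -/
theorem locallyNilpotentDerivation_extends_from_localization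
    (A : Type) [CommRing A] [IsDomain A] [Algebra ℂ A] [Algebra.FiniteType ℂ A]
    (f : A) (hf : f ≠ 0)
    (D : Derivation ℂ (Localization.Away f) (Localization.Away f))
    (hDf : D (algebraMap A (Localization.Away f) f) = 0)
    (hLND : ∀ x : Localization.Away f, ∃ n : ℕ, (⇑D)^[n] x = 0) :
    ∃ N : ℕ, ∃ D' : Derivation ℂ A A,
      (∀ a : A, algebraMap A (Localization.Away f) (D' a) =
        algebraMap A (Localization.Away f) f ^ N * D (algebraMap A (Localization.Away f) a)) ∧
      (∀ a : A, ∃ n : ℕ, (⇑D')^[n] a = 0) ∧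
      (D ≠ 0 → D' ≠ 0) := by
  set ι := algebraMap A (Localization.Away f)
  have hinj : Injective ι :=
    IsLocalization.injective _ (powers_le_nonZeroDivisors_of_noZeroDivisors hf)
  obtain ⟨_, ⟨N, rfl⟩, hN⟩ :=
    (D.compAlgebraMap A).exists_smul_mem_range_of_isLocalization (Submonoid.powers f)
  set D' := (f ^ N • D.compAlgebraMap A).descend hinj hN
  have hD' (a : A) : ι (D' a) = ι f ^ N * D (ι a) := by
    rw [Derivation.algebraMap_descend, Derivation.smul_apply, Derivation.compAlgebraMap_apply,
      Algebra.smul_def, map_pow]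
  refine ⟨N, D', hD', fun a ↦ ?_, fun hD hD'_eq ↦ hD ?_⟩
  · have hDfN : D (ι f ^ N) = 0 := by simp [Derivation.leibniz_pow, hDf]
    have hsemi : Semiconj ι D' ⇑(ι f ^ N • D) := hD'
    obtain ⟨n, hn⟩ := hLND (ι a)
    refine ⟨n, hinj ?_⟩
    rw [hsemi.iterate_right, D.iterate_smul_apply_of_map_eq_zero hDfN, hn, mul_zero, map_zero]
  · refine D.eq_zero_of_isLocalization (Submonoid.powers f) fun a ↦ ?_
    have h := hD' a
    rw [hD'_eq, Derivation.zero_apply, map_zero] at h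
    exact ((IsLocalization.Away.algebraMap_isUnit f).pow N).mul_right_eq_zero.mp h.symm
end

section
/- Let I be the principal ideal (xy − zu) of the polynomial ring ℂ[x,y,z,u] and let A = ℂ[x,y,z,u]/I. The derivations ∂₁ = u·∂/∂x + y·∂/∂z and ∂₂ = u·∂/∂y + x·∂/∂z of ℂ[x,y,z,u] map I into I, hence induce ℂ-derivations of A; these induced derivations of A are nonzero, locally nilpotent, and commute with each other. -/
/-!
Both derivations kill `xy − zu`, so by the Leibniz rule they preserve the ideal it generates and
descend to the quotient. Each maps every variable to a variable or to `0` that it then kills, and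
the elements killed by some iterate of a derivation are closed under sums and products (Leibniz
again: `D^[m] a = 0` and `D^[n] b = 0` give `D^[m + n] (a * b) = 0`), so both are locally
nilpotent. Their commutator vanishes on the variables, hence everywhere, and they are nonzero on
the cone because `∂₁ x = ∂₂ y = u` does not vanish at the point `(1, 0, 0, 1)` of the cone.
-/

open MvPolynomial

/-- The quadratic polynomial `xy − zu` in `ℂ[x,y,z,u]` (with `x = X 0`, `y = X 1`,
`z = X 2`, `u = X 3`). -/
noncomputable def quadricPoly : MvPolynomial (Fin 4) ℂ := X 0 * X 1 - X 2 * X 3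

/-- The principal ideal `(xy − zu)` of `ℂ[x,y,z,u]`. -/
noncomputable def quadricIdeal : Ideal (MvPolynomial (Fin 4) ℂ) := Ideal.span {quadricPoly}

/-- The coordinate ring `A = ℂ[x,y,z,u]/(xy − zu)` of the affine cone over the quadric
`{xy = zu} ⊆ ℙ³`. -/
noncomputable abbrev quadricConeRing : Type := MvPolynomial (Fin 4) ℂ ⧸ quadricIdeal

/-- The derivation `∂₁ = u·∂/∂x + y·∂/∂z` of `ℂ[x,y,z,u]`. -/
noncomputable def der₁ : Derivation ℂ (MvPolynomial (Fin 4) ℂ) (MvPolynomial (Fin 4) ℂ) :=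
  (X 3 : MvPolynomial (Fin 4) ℂ) •
      (pderiv 0 : Derivation ℂ (MvPolynomial (Fin 4) ℂ) (MvPolynomial (Fin 4) ℂ)) +
    (X 1 : MvPolynomial (Fin 4) ℂ) •
      (pderiv 2 : Derivation ℂ (MvPolynomial (Fin 4) ℂ) (MvPolynomial (Fin 4) ℂ))

/-- The derivation `∂₂ = u·∂/∂y + x·∂/∂z` of `ℂ[x,y,z,u]`. -/
noncomputable def der₂ : Derivation ℂ (MvPolynomial (Fin 4) ℂ) (MvPolynomial (Fin 4) ℂ) :=
  (X 3 : MvPolynomial (Fin 4) ℂ) •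
      (pderiv 1 : Derivation ℂ (MvPolynomial (Fin 4) ℂ) (MvPolynomial (Fin 4) ℂ)) +
    (X 0 : MvPolynomial (Fin 4) ℂ) •
      (pderiv 2 : Derivation ℂ (MvPolynomial (Fin 4) ℂ) (MvPolynomial (Fin 4) ℂ))

namespace Derivation

open Function

section LocallyNilpotent

variable {R A : Type*} [CommSemiring R] [CommSemiring A] [Algebra R A] (D : Derivation R A A)

def IsLocallyNilpotent : Prop := ∀ a, ∃ n, D^[n] a = 0

theorem iterate_eq_zero_of_le {m n : ℕ} {a : A} (ha : D^[m] a = 0) (hmn : m ≤ n) :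
    D^[n] a = 0 := by
  rw [← Nat.sub_add_cancel hmn, iterate_add_apply, ha, iterate_map_zero]

theorem iterate_add_mul_eq_zero {m n : ℕ} {a b : A} (ha : D^[m] a = 0) (hb : D^[n] b = 0) :
    D^[m + n] (a * b) = 0 := by
  induction h : m + n generalizing m n a b with
  | zero =>
    obtain ⟨rfl, -⟩ : m = 0 ∧ n = 0 := by omega
    simp_all
  | succ k ih =>
    rcases m with _ | m
    · simp_all
    rcases n with _ | n
    · simp_all
    rw [iterate_succ_apply, leibniz, iterate_map_add, smul_eq_mul, smul_eq_mul,
      ih ha (n := n) (by rwa [← iterate_succ_apply]) (by omega),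
      ih hb (n := m) (by rwa [← iterate_succ_apply]) (by omega), add_zero]

theorem isLocallyNilpotent_of_adjoin_eq_top {s : Set A} (hs : Algebra.adjoin R s = ⊤)
    (h : ∀ a ∈ s, ∃ n, D^[n] a = 0) : D.IsLocallyNilpotent := by
  intro a
  induction (hs ▸ Algebra.mem_top : a ∈ Algebra.adjoin R s) using Algebra.adjoin_induction with
  | mem a ha => exact h a ha
  | algebraMap r => exact ⟨1, D.map_algebraMap r⟩
  | add a b _ _ ha hb =>
    obtain ⟨m, hm⟩ := ha
    obtain ⟨n, hn⟩ := hb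
    exact ⟨max m n, by rw [iterate_map_add, D.iterate_eq_zero_of_le hm (le_max_left m n),
      D.iterate_eq_zero_of_le hn (le_max_right m n), add_zero]⟩
  | mul a b _ _ ha hb =>
    obtain ⟨m, hm⟩ := ha
    obtain ⟨n, hn⟩ := hb
    exact ⟨m + n, D.iterate_add_mul_eq_zero hm hn⟩

end LocallyNilpotent

theorem mapsTo_span {R A : Type*} [CommSemiring R] [CommSemiring A] [Algebra R A]
    (D : Derivation R A A) {s : Set A} (h : Set.MapsTo D s (Ideal.span s)) :
    Set.MapsTo D (Ideal.span s) (Ideal.span s) := by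
  intro a ha
  induction ha using Submodule.span_induction with
  | mem a ha => exact h ha
  | zero => simp
  | add a b _ _ ha hb => simpa using add_mem ha hb
  | smul c a ha hDa =>
    rw [smul_eq_mul, leibniz]
    exact add_mem (Ideal.mul_mem_left _ c hDa) (Ideal.mul_mem_right _ _ ha)

section Quotient

variable {R A : Type*} [CommRing R] [CommRing A] [Algebra R A]

def quotient (D : Derivation R A A) (I : Ideal A) (hD : Set.MapsTo D I I) :
    Derivation R (A ⧸ I) (A ⧸ I) where
  -- the `R`-module `A ⧸ I` is identified with the quotient by the `R`-submodule underlying `I`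
  toLinearMap := (Submodule.Quotient.restrictScalarsEquiv R I).toLinearMap ∘ₗ
    (I.restrictScalars R).mapQ (I.restrictScalars R) D.toLinearMap hD ∘ₗ
    (Submodule.Quotient.restrictScalarsEquiv R I).symm.toLinearMap
  map_one_eq_zero' := by
    change Ideal.Quotient.mk I (D 1) = 0
    simp
  leibniz' a b := by
    obtain ⟨a, rfl⟩ := Ideal.Quotient.mk_surjective a
    obtain ⟨b, rfl⟩ := Ideal.Quotient.mk_surjective b
    change Ideal.Quotient.mk I (D (a * b)) =
      Ideal.Quotient.mk I a * Ideal.Quotient.mk I (D b) +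
        Ideal.Quotient.mk I b * Ideal.Quotient.mk I (D a)
    simp only [leibniz, smul_eq_mul, map_add, map_mul]

@[simp]
theorem quotient_mk (D : Derivation R A A) (I : Ideal A) (hD : Set.MapsTo D I I) (a : A) :
    D.quotient I hD (Ideal.Quotient.mk I a) = Ideal.Quotient.mk I (D a) :=
  rfl

theorem semiconj_quotient_mk (D : Derivation R A A) (I : Ideal A) (hD : Set.MapsTo D I I) :
    Semiconj (Ideal.Quotient.mk I) D (D.quotient I hD) :=
  fun a => (D.quotient_mk I hD a).symm

theorem IsLocallyNilpotent.quotient {D : Derivation R A A} (h : D.IsLocallyNilpotent)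
    (I : Ideal A) (hD : Set.MapsTo D I I) :
    (D.quotient I hD).IsLocallyNilpotent := by
  intro a
  obtain ⟨a, rfl⟩ := Ideal.Quotient.mk_surjective a
  obtain ⟨n, hn⟩ := h a
  exact ⟨n, by rw [← (D.semiconj_quotient_mk I hD).iterate_right n a, hn, map_zero]⟩

theorem quotient_ne_zero (D : Derivation R A A) (I : Ideal A) (hD : Set.MapsTo D I I) {a : A}
    (ha : D a ∉ I) : D.quotient I hD ≠ 0 := by
  intro h
  apply ha
  rw [← Ideal.Quotient.eq_zero_iff_mem, ← D.quotient_mk I hD, h, zero_apply]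

theorem commute_quotient {D₁ D₂ : Derivation R A A} (I : Ideal A) (h₁ : Set.MapsTo D₁ I I)
    (h₂ : Set.MapsTo D₂ I I) (h : Function.Commute D₁ D₂) :
    Function.Commute (D₁.quotient I h₁) (D₂.quotient I h₂) := by
  intro a
  obtain ⟨a, rfl⟩ := Ideal.Quotient.mk_surjective a
  simp only [quotient_mk, h a]

end Quotient

end Derivation

theorem der₁_X (i : Fin 4) : der₁ (X i : MvPolynomial (Fin 4) ℂ) = ![X 3, 0, X 1, 0] i := by
  fin_cases i <;> simp [der₁, pderiv_X]

theorem der₂_X (i : Fin 4) : der₂ (X i : MvPolynomial (Fin 4) ℂ) = ![0, X 3, X 0, 0] i := by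
  fin_cases i <;> simp [der₂, pderiv_X]

theorem der₁_quadricPoly : der₁ quadricPoly = 0 := by
  simp [quadricPoly, der₁_X]
  ring

theorem der₂_quadricPoly : der₂ quadricPoly = 0 := by
  simp [quadricPoly, der₂_X]
  ring

theorem mapsTo_quadricIdeal {D : Derivation ℂ (MvPolynomial (Fin 4) ℂ) (MvPolynomial (Fin 4) ℂ)}
    (hD : D quadricPoly = 0) : Set.MapsTo D quadricIdeal quadricIdeal :=
  D.mapsTo_span (by simp [hD])

theorem der₁_isLocallyNilpotent : der₁.IsLocallyNilpotent :=
  der₁.isLocallyNilpotent_of_adjoin_eq_top adjoin_range_X <| by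
    rintro _ ⟨i, rfl⟩
    exact ⟨2, by fin_cases i <;> simp [der₁_X]⟩

theorem der₂_isLocallyNilpotent : der₂.IsLocallyNilpotent :=
  der₂.isLocallyNilpotent_of_adjoin_eq_top adjoin_range_X <| by
    rintro _ ⟨i, rfl⟩
    exact ⟨2, by fin_cases i <;> simp [der₂_X]⟩

theorem der₁_commute_der₂ : Function.Commute der₁ der₂ := by
  have h : ⁅der₁, der₂⁆ = 0 := derivation_ext fun i => by
    fin_cases i <;> simp [Derivation.commutator_apply, der₁_X, der₂_X]
  intro p
  rw [← sub_eq_zero, ← Derivation.commutator_apply, h, Derivation.zero_apply]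

theorem X_three_notMem_quadricIdeal : (X 3 : MvPolynomial (Fin 4) ℂ) ∉ quadricIdeal := by
  have h : quadricIdeal ≤ RingHom.ker (eval ![1, 0, 0, 1]) :=
    Ideal.span_singleton_le_iff_mem _ |>.mpr (by simp [quadricPoly])
  exact fun h3 => by simpa using h h3

/-- Example 3.3. The derivations `∂₁ = u·∂/∂x + y·∂/∂z` and
`∂₂ = u·∂/∂y + x·∂/∂z` of `ℂ[x,y,z,u]` map the ideal `I = (xy − zu)` into itself, hence
induce ℂ-derivations of `A = ℂ[x,y,z,u]/I`; these induced derivations of `A` are nonzero,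
locally nilpotent, and commute with each other. -/
theorem quadricCone_commuting_locally_nilpotent_derivations :
    (∀ p ∈ quadricIdeal, der₁ p ∈ quadricIdeal) ∧
    (∀ p ∈ quadricIdeal, der₂ p ∈ quadricIdeal) ∧
    ∃ E₁ E₂ : Derivation ℂ quadricConeRing quadricConeRing,
      (∀ p : MvPolynomial (Fin 4) ℂ,
          E₁ (Ideal.Quotient.mk quadricIdeal p) = Ideal.Quotient.mk quadricIdeal (der₁ p)) ∧
      (∀ p : MvPolynomial (Fin 4) ℂ,
          E₂ (Ideal.Quotient.mk quadricIdeal p) = Ideal.Quotient.mk quadricIdeal (der₂ p)) ∧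
      E₁ ≠ 0 ∧ E₂ ≠ 0 ∧
      (∀ a : quadricConeRing, ∃ n : ℕ, (⇑E₁)^[n] a = 0) ∧
      (∀ a : quadricConeRing, ∃ n : ℕ, (⇑E₂)^[n] a = 0) ∧
      (∀ a : quadricConeRing, E₁ (E₂ a) = E₂ (E₁ a)) := by
  have h₁ := mapsTo_quadricIdeal der₁_quadricPoly
  have h₂ := mapsTo_quadricIdeal der₂_quadricPoly
  refine ⟨fun _ hp => h₁ hp, fun _ hp => h₂ hp, der₁.quotient _ h₁, der₂.quotient _ h₂,
    der₁.quotient_mk _ h₁, der₂.quotient_mk _ h₂, ?_, ?_, der₁_isLocallyNilpotent.quotient _ h₁,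
    der₂_isLocallyNilpotent.quotient _ h₂, Derivation.commute_quotient _ h₁ h₂ der₁_commute_der₂⟩
  · exact der₁.quotient_ne_zero _ h₁ (a := X 0) <| by
      simpa [der₁_X] using X_three_notMem_quadricIdeal
  · exact der₂.quotient_ne_zero _ h₂ (a := X 1) <| by
      simpa [der₂_X] using X_three_notMem_quadricIdeal
end
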